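/- arXiv:1909.00801 — 3 statements merged into one kernel-verified Lean document; each statement's English description precedes it below -/
import Mathlib

section
/- For every complex number λ = i s with s real and |s| ≥ (1/√2 + 1)², one has |cosh(λ) + √λ sinh(λ)| ≥ 1/2 and |cosh(λ) − √λ sinh(λ)| ≥ 1/2, where √λ denotes the principal square root (branch cut along the negative real axis). -/
open Complex

/-!
For `w = (I * s) ^ (1 / 2)`, the relation `w ^ 2 = I * s` alone forces
`w.re ^ 2 = w.im ^ 2 = |s| / 2`. As `cosh (I * s) = cos s` and `sinh (I * s) = I * sin s`, the
number `cosh (I * s) ± w * sinh (I * s)` is `(a - u) + b * I` with `a = cos s` and `u ^ 2 = b ^ 2 =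
(|s| / 2) * sin s ^ 2`. The positive definite form `(a - u) ^ 2 + u ^ 2` dominates
`(a ^ 2 + u ^ 2) / 4`, and `a ^ 2 + b ^ 2 ≥ 1` as soon as `|s| ≥ 2`.
-/

theorem sq_add_sq_div_four_le_sub_sq_add_sq (a b u : ℝ) (hu : u ^ 2 = b ^ 2) :
    (a ^ 2 + b ^ 2) / 4 ≤ (a - u) ^ 2 + b ^ 2 := by
  nlinarith [sq_nonneg (3 * a - 4 * u)]

theorem sq_re_eq_and_sq_im_eq_of_sq_eq_I_mul {w : ℂ} {s : ℝ} (hw : w ^ 2 = I * s) :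
    w.re ^ 2 = |s| / 2 ∧ w.im ^ 2 = |s| / 2 := by
  have hre : w.re ^ 2 - w.im ^ 2 = 0 := by simpa [sq] using congrArg re hw
  have him : 2 * w.re * w.im = s := by
    linear_combination (by simpa [sq] using congrArg im hw : w.re * w.im + w.im * w.re = s)
  -- `w.re ^ 2` is a nonnegative square root of `(s / 2) ^ 2 = w.re ^ 2 * w.im ^ 2`.
  have hsq : (w.re ^ 2) ^ 2 = (|s| / 2) ^ 2 := by
    rw [div_pow, sq_abs, ← him]; linear_combination w.re ^ 2 * hre
  have := (sq_eq_sq₀ (sq_nonneg _) (by positivity)).1 hsq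
  exact ⟨this, by linarith⟩

theorem half_le_norm_cosh_add_mul_sinh_I_mul {w : ℂ} {s : ℝ} (hs : 2 ≤ |s|)
    (hre : w.re ^ 2 = |s| / 2) (him : w.im ^ 2 = |s| / 2) :
    1 / 2 ≤ ‖cosh (I * s) + w * sinh (I * s)‖ := by
  have hz : cosh (I * s) + w * sinh (I * s) =
      (Real.cos s - w.im * Real.sin s : ℝ) + (w.re * Real.sin s : ℝ) * I := by
    rw [mul_comm I, cosh_mul_I, sinh_mul_I]
    apply Complex.ext <;> simp [sub_eq_add_neg]
  have hpyth : 1 ≤ Real.cos s ^ 2 + (w.re * Real.sin s) ^ 2 := by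
    rw [mul_pow, hre]; nlinarith [Real.cos_sq_add_sin_sq s, sq_nonneg (Real.sin s)]
  have hquarter := sq_add_sq_div_four_le_sub_sq_add_sq (Real.cos s) (w.re * Real.sin s)
    (w.im * Real.sin s) (by rw [mul_pow, mul_pow, hre, him])
  have hnorm : 1 / 4 ≤ ‖cosh (I * s) + w * sinh (I * s)‖ ^ 2 := by
    rw [Complex.sq_norm, hz, normSq_add_mul_I]; linarith
  nlinarith [norm_nonneg (cosh (I * s) + w * sinh (I * s))]

theorem two_le_one_div_sqrt_two_add_one_sq : 2 ≤ (1 / Real.sqrt 2 + 1) ^ 2 := by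
  have hinv : 1 / 2 ≤ 1 / Real.sqrt 2 := by
    gcongr; nlinarith [Real.sq_sqrt (show (0:ℝ) ≤ 2 by norm_num), Real.sqrt_nonneg 2]
  nlinarith

theorem stmt0 (s : ℝ) (hs : |s| ≥ (1 / Real.sqrt 2 + 1) ^ 2) :
    ‖Complex.cosh (I * s) + (I * s) ^ (1/2 : ℂ) * Complex.sinh (I * s)‖ ≥ 1/2 ∧
    ‖Complex.cosh (I * s) - (I * s) ^ (1/2 : ℂ) * Complex.sinh (I * s)‖ ≥ 1/2 := by
  have hs2 : 2 ≤ |s| := two_le_one_div_sqrt_two_add_one_sq.trans hs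
  have hsq : ((I * s) ^ (1/2 : ℂ)) ^ 2 = I * s := by rw [one_div, cpow_ofNat_inv_pow]
  obtain ⟨hre, him⟩ := sq_re_eq_and_sq_im_eq_of_sq_eq_I_mul hsq
  refine ⟨half_le_norm_cosh_add_mul_sinh_I_mul hs2 hre him, ?_⟩
  rw [sub_eq_add_neg, ← neg_mul]
  exact half_le_norm_cosh_add_mul_sinh_I_mul hs2 (by rwa [neg_re, neg_sq]) (by rwa [neg_im, neg_sq])
end

section
/- There exists a constant C ≥ 0 such that for all f ∈ H¹(0,1), all g ∈ L²(0,1), all purely imaginary λ, and all ξ ∈ [0,1], one has |∫₀^ξ sinh(λ(ξ−r))(λ f(r) + g(r)) dr| ≤ C‖f‖_{H¹} + ‖g‖_{L²} and |∫₀^ξ cosh(λ(ξ−r))(λ f(r) + g(r)) dr| ≤ C‖f‖_{H¹} + ‖g‖_{L²}. -/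
/-!
With `μ = i s`, the kernels satisfy `∂ᵣ cosh (μ (ξ - r)) = -μ sinh (μ (ξ - r))` and
`∂ᵣ sinh (μ (ξ - r)) = -μ cosh (μ (ξ - r))`, so integrating by parts moves the factor `μ` from `f`
onto the kernel. What is left are boundary values of `f` and integrals of `f'` and `g` against
`sinh`, `cosh` of purely imaginary arguments, which have modulus at most `1`. The boundary values
are bounded by `‖f‖_{L¹} + ‖f'‖_{L¹}` (average `‖f x‖ ≤ ‖f t‖ + ‖f'‖_{L¹}` over `t`), and on
`(0, 1)` the `L¹` norms are bounded by the `L²` norms.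
-/

open Complex MeasureTheory intervalIntegral

namespace Complex

lemma norm_sinh_le_one_of_re_eq_zero {z : ℂ} (hz : z.re = 0) : ‖sinh z‖ ≤ 1 := by
  rw [← re_add_im z, hz, ofReal_zero, zero_add, sinh_mul_I, ← ofReal_sin, norm_mul, norm_I,
    mul_one, norm_real, Real.norm_eq_abs]
  exact Real.abs_sin_le_one _

lemma norm_cosh_le_one_of_re_eq_zero {z : ℂ} (hz : z.re = 0) : ‖cosh z‖ ≤ 1 := by
  rw [← re_add_im z, hz, ofReal_zero, zero_add, cosh_mul_I, ← ofReal_cos, norm_real,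
    Real.norm_eq_abs]
  exact Real.abs_cos_le_one _

end Complex

lemma norm_mul_le_of_norm_le_one {R : Type*} [NonUnitalSeminormedRing R] {x y : R}
    (hx : ‖x‖ ≤ 1) : ‖x * y‖ ≤ ‖y‖ :=
  (norm_mul_le _ _).trans (mul_le_of_le_one_left (norm_nonneg _) hx)

section IntegrationByParts

variable {f f' : ℝ → ℂ} {a b : ℝ}

lemma hasDerivAt_const_mul_sub_ofReal (μ : ℂ) (b r : ℝ) :
    HasDerivAt (fun t : ℝ => μ * (b - t)) (-μ) r := by
  simpa using (((hasDerivAt_id (r : ℂ)).const_sub (b : ℂ)).const_mul μ).comp_ofReal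

lemma integral_sinh_mul_mul_eq (μ : ℂ) (hab : a ≤ b) (hf : ContinuousOn f (Set.Icc a b))
    (hff' : ∀ x ∈ Set.Ioo a b, HasDerivAt f (f' x) x) (hf' : IntervalIntegrable f' volume a b) :
    ∫ r in a..b, sinh (μ * (b - r)) * (μ * f r) =
      cosh (μ * (b - a)) * f a - f b + ∫ r in a..b, cosh (μ * (b - r)) * f' r := by
  have h := integral_mul_deriv_eq_deriv_mul_of_hasDerivAt (a := a) (b := b)
    (u := fun r : ℝ => cosh (μ * (b - r))) (u' := fun r => sinh (μ * (b - r)) * -μ)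
    (by fun_prop) (by rwa [Set.uIcc_of_le hab])
    (fun r _ => (hasDerivAt_cosh _).comp r (hasDerivAt_const_mul_sub_ofReal μ b r))
    (by rw [min_eq_left hab, max_eq_right hab]; exact hff')
    (by apply Continuous.intervalIntegrable; fun_prop) hf'
  simp only [sub_self, mul_zero, cosh_zero, one_mul] at h
  rw [h]
  simp only [mul_neg, neg_mul, intervalIntegral.integral_neg, mul_assoc]
  ring

lemma integral_cosh_mul_mul_eq (μ : ℂ) (hab : a ≤ b) (hf : ContinuousOn f (Set.Icc a b))
    (hff' : ∀ x ∈ Set.Ioo a b, HasDerivAt f (f' x) x) (hf' : IntervalIntegrable f' volume a b) :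
    ∫ r in a..b, cosh (μ * (b - r)) * (μ * f r) =
      sinh (μ * (b - a)) * f a + ∫ r in a..b, sinh (μ * (b - r)) * f' r := by
  have h := integral_mul_deriv_eq_deriv_mul_of_hasDerivAt (a := a) (b := b)
    (u := fun r : ℝ => sinh (μ * (b - r))) (u' := fun r => cosh (μ * (b - r)) * -μ)
    (by fun_prop) (by rwa [Set.uIcc_of_le hab])
    (fun r _ => (hasDerivAt_sinh _).comp r (hasDerivAt_const_mul_sub_ofReal μ b r))
    (by rw [min_eq_left hab, max_eq_right hab]; exact hff')
    (by apply Continuous.intervalIntegrable; fun_prop) hf'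
  simp only [sub_self, mul_zero, sinh_zero, zero_mul, zero_sub] at h
  rw [h]
  simp only [mul_neg, neg_mul, intervalIntegral.integral_neg, mul_assoc]
  ring

end IntegrationByParts

lemma norm_integral_mul_le_integral_norm_of_norm_le_one {k h : ℝ → ℂ} {a b : ℝ}
    (hab : a ≤ b) (hk : ∀ r, ‖k r‖ ≤ 1) (hh : IntervalIntegrable h volume a b) :
    ‖∫ r in a..b, k r * h r‖ ≤ ∫ r in a..b, ‖h r‖ :=
  norm_integral_le_of_norm_le hab (ae_of_all _ fun r _ => norm_mul_le_of_norm_le_one (hk r))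
    hh.norm

section ImaginaryExponent

variable {f f' g : ℝ → ℂ} {a b : ℝ} {μ : ℂ}

lemma re_mul_ofReal_sub_eq_zero (hμ : μ.re = 0) (b r : ℝ) : (μ * (b - r)).re = 0 := by
  simp [hμ]

lemma norm_integral_sinh_mul_le (hμ : μ.re = 0) (hab : a ≤ b)
    (hf : ContinuousOn f (Set.Icc a b))
    (hff' : ∀ x ∈ Set.Ioo a b, HasDerivAt f (f' x) x) (hf' : IntervalIntegrable f' volume a b)
    (hg : IntervalIntegrable g volume a b) :
    ‖∫ r in a..b, sinh (μ * (b - r)) * (μ * f r + g r)‖ ≤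
      ‖f a‖ + ‖f b‖ + (∫ r in a..b, ‖f' r‖) + ∫ r in a..b, ‖g r‖ := by
  have hsinh r := norm_sinh_le_one_of_re_eq_zero (re_mul_ofReal_sub_eq_zero hμ b r)
  have hcosh r := norm_cosh_le_one_of_re_eq_zero (re_mul_ofReal_sub_eq_zero hμ b r)
  have hfμ : IntervalIntegrable (fun r => sinh (μ * (b - r)) * (μ * f r)) volume a b := by
    apply ContinuousOn.intervalIntegrable
    rw [Set.uIcc_of_le hab]
    fun_prop
  simp only [mul_add]
  rw [integral_add hfμ (hg.continuousOn_mul (by fun_prop)),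
    integral_sinh_mul_mul_eq μ hab hf hff' hf']
  calc _ ≤ ‖cosh (μ * (b - a)) * f a‖ + ‖f b‖
        + ‖∫ r in a..b, cosh (μ * (b - r)) * f' r‖
        + ‖∫ r in a..b, sinh (μ * (b - r)) * g r‖ := by
        grw [norm_add_le, norm_add_le, norm_sub_le]
    _ ≤ _ := by
      grw [norm_mul_le_of_norm_le_one (hcosh a),
        norm_integral_mul_le_integral_norm_of_norm_le_one hab hcosh hf',
        norm_integral_mul_le_integral_norm_of_norm_le_one hab hsinh hg]

lemma norm_integral_cosh_mul_le (hμ : μ.re = 0) (hab : a ≤ b)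
    (hf : ContinuousOn f (Set.Icc a b))
    (hff' : ∀ x ∈ Set.Ioo a b, HasDerivAt f (f' x) x) (hf' : IntervalIntegrable f' volume a b)
    (hg : IntervalIntegrable g volume a b) :
    ‖∫ r in a..b, cosh (μ * (b - r)) * (μ * f r + g r)‖ ≤
      ‖f a‖ + (∫ r in a..b, ‖f' r‖) + ∫ r in a..b, ‖g r‖ := by
  have hsinh r := norm_sinh_le_one_of_re_eq_zero (re_mul_ofReal_sub_eq_zero hμ b r)
  have hcosh r := norm_cosh_le_one_of_re_eq_zero (re_mul_ofReal_sub_eq_zero hμ b r)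
  have hfμ : IntervalIntegrable (fun r => cosh (μ * (b - r)) * (μ * f r)) volume a b := by
    apply ContinuousOn.intervalIntegrable
    rw [Set.uIcc_of_le hab]
    fun_prop
  simp only [mul_add]
  rw [integral_add hfμ (hg.continuousOn_mul (by fun_prop)),
    integral_cosh_mul_mul_eq μ hab hf hff' hf']
  calc _ ≤ ‖sinh (μ * (b - a)) * f a‖ + ‖∫ r in a..b, sinh (μ * (b - r)) * f' r‖
        + ‖∫ r in a..b, cosh (μ * (b - r)) * g r‖ := by
        grw [norm_add_le, norm_add_le]
    _ ≤ _ := by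
      grw [norm_mul_le_of_norm_le_one (hsinh a),
        norm_integral_mul_le_integral_norm_of_norm_le_one hab hsinh hf',
        norm_integral_mul_le_integral_norm_of_norm_le_one hab hcosh hg]

end ImaginaryExponent

section FundamentalTheorem

variable {E : Type*} [NormedAddCommGroup E] [NormedSpace ℝ E] [CompleteSpace E]
  {f f' : ℝ → E} {a b : ℝ}

lemma norm_sub_le_integral_norm_deriv (hf : ContinuousOn f (Set.Icc a b))
    (hff' : ∀ x ∈ Set.Ioo a b, HasDerivAt f (f' x) x) (hf' : IntervalIntegrable f' volume a b)
    {x y : ℝ} (hx : x ∈ Set.Icc a b) (hy : y ∈ Set.Icc a b) :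
    ‖f x - f y‖ ≤ ∫ t in a..b, ‖f' t‖ := by
  wlog hyx : y ≤ x generalizing x y
  · rw [norm_sub_rev]
    exact this hy hx (le_of_not_ge hyx)
  rw [← integral_eq_sub_of_hasDerivAt_of_le hyx (hf.mono (Set.Icc_subset_Icc hy.1 hx.2))
    (fun t ht => hff' t ⟨hy.1.trans_lt ht.1, ht.2.trans_le hx.2⟩)
    (hf'.mono_set (Set.uIcc_subset_uIcc (Set.mem_uIcc_of_le hy.1 hy.2)
      (Set.mem_uIcc_of_le hx.1 hx.2)))]
  exact (intervalIntegral.norm_integral_le_integral_norm hyx).trans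
    (integral_mono_interval hy.1 hyx hx.2 (ae_of_all _ fun _ => norm_nonneg _) hf'.norm)

lemma mul_norm_le_integral_norm_add_mul_integral_norm_deriv
    (hf : ContinuousOn f (Set.Icc a b))
    (hff' : ∀ x ∈ Set.Ioo a b, HasDerivAt f (f' x) x) (hf' : IntervalIntegrable f' volume a b)
    {x : ℝ} (hx : x ∈ Set.Icc a b) :
    (b - a) * ‖f x‖ ≤ (∫ t in a..b, ‖f t‖) + (b - a) * ∫ t in a..b, ‖f' t‖ := by
  have hab : a ≤ b := hx.1.trans hx.2
  have hfx : ∀ t ∈ Set.Icc a b, ‖f x‖ ≤ ‖f t‖ + ∫ t in a..b, ‖f' t‖ := fun t ht =>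
    norm_le_norm_add_norm_sub' (f x) (f t) |>.trans
      (add_le_add_right (norm_sub_le_integral_norm_deriv hf hff' hf' hx ht) _)
  have hfi : IntervalIntegrable (fun t => ‖f t‖) volume a b :=
    hf.norm.intervalIntegrable_of_Icc hab
  have := integral_mono_on hab intervalIntegrable_const (hfi.add intervalIntegrable_const) hfx
  simpa [integral_add hfi intervalIntegrable_const] using this

end FundamentalTheorem

lemma integral_norm_le_sqrt_measureReal_univ_mul_sqrt_integral_norm_sq {α E : Type*}
    [MeasurableSpace α] [NormedAddCommGroup E] {μ : Measure α} [IsFiniteMeasure μ] {h : α → E}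
    (hh : MemLp h 2 μ) :
    ∫ x, ‖h x‖ ∂μ ≤ √(μ.real Set.univ) * √(∫ x, ‖h x‖ ^ 2 ∂μ) := by
  have := integral_mul_le_Lp_mul_Lq_of_nonneg Real.HolderConjugate.two_two
    (ae_of_all _ fun x => norm_nonneg (h x)) (ae_of_all _ fun _ => zero_le_one)
    (by simpa using hh.norm) (by simpa using memLp_const (μ := μ) (1 : ℝ))
  simp only [mul_one, Real.one_rpow, MeasureTheory.integral_const, smul_eq_mul] at this
  rw [Real.sqrt_eq_rpow, Real.sqrt_eq_rpow, mul_comm]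
  simpa [Real.rpow_two] using this

lemma MeasureTheory.MemLp.intervalIntegrable {E : Type*} [NormedAddCommGroup E] {h : ℝ → E}
    {p : ENNReal} {a b : ℝ} (hp : 1 ≤ p) (hab : a ≤ b)
    (hh : MemLp h p (volume.restrict (Set.Ioo a b))) : IntervalIntegrable h volume a b :=
  (intervalIntegrable_iff_integrableOn_Ioo_of_le hab).2 (hh.integrable hp)

lemma intervalIntegral.integral_norm_le_sqrt_integral_zero_one_norm_sq {E : Type*}
    [NormedAddCommGroup E] {h : ℝ → E} (hh : MemLp h 2 (volume.restrict (Set.Ioo 0 1)))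
    {ξ : ℝ} (hξ : ξ ∈ Set.Icc 0 1) :
    ∫ t in (0:ℝ)..ξ, ‖h t‖ ≤ √(∫ t in (0:ℝ)..1, ‖h t‖ ^ 2) := by
  refine (integral_mono_interval le_rfl hξ.1 hξ.2 (ae_of_all _ fun _ => norm_nonneg _)
    (hh.intervalIntegrable one_le_two zero_le_one).norm).trans ?_
  simp only [integral_of_le zero_le_one, integral_Ioc_eq_integral_Ioo]
  simpa using integral_norm_le_sqrt_measureReal_univ_mul_sqrt_integral_norm_sq hh

lemma norm_le_two_mul_sqrt_integral_norm_sq_add_integral_norm_deriv_sq {E : Type*}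
    [NormedAddCommGroup E] [NormedSpace ℝ E] [CompleteSpace E] {f f' : ℝ → E}
    (hf : ContinuousOn f (Set.Icc 0 1)) (hff' : ∀ x ∈ Set.Ioo 0 1, HasDerivAt f (f' x) x)
    (hf' : MemLp f' 2 (volume.restrict (Set.Ioo 0 1))) {x : ℝ} (hx : x ∈ Set.Icc 0 1) :
    ‖f x‖ ≤ 2 * √((∫ t in (0:ℝ)..1, ‖f t‖ ^ 2) + ∫ t in (0:ℝ)..1, ‖f' t‖ ^ 2) := by
  have hf2 : MemLp f 2 (volume.restrict (Set.Ioo 0 1)) := by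
    obtain ⟨M, hM⟩ := isCompact_Icc.exists_bound_of_continuousOn hf
    exact .of_bound
      ((hf.mono Set.Ioo_subset_Icc_self).aestronglyMeasurable measurableSet_Ioo) M
      ((ae_restrict_iff' measurableSet_Ioo).2
        (ae_of_all _ fun y hy => hM y (Set.Ioo_subset_Icc_self hy)))
  have hsq {h : ℝ → E} : 0 ≤ ∫ t in (0:ℝ)..1, ‖h t‖ ^ 2 :=
    integral_nonneg zero_le_one fun _ _ => sq_nonneg _
  have h1 : (1 : ℝ) ∈ Set.Icc 0 1 := Set.right_mem_Icc.2 zero_le_one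
  have hfL2 := (integral_norm_le_sqrt_integral_zero_one_norm_sq hf2 h1).trans
    (Real.sqrt_le_sqrt (le_add_of_nonneg_right (hsq (h := f'))))
  have hf'L2 := (integral_norm_le_sqrt_integral_zero_one_norm_sq hf' h1).trans
    (Real.sqrt_le_sqrt (le_add_of_nonneg_left (hsq (h := f))))
  have := mul_norm_le_integral_norm_add_mul_integral_norm_deriv hf hff'
    (hf'.intervalIntegrable one_le_two zero_le_one) hx
  simp only [sub_zero, one_mul] at this
  linarith

theorem stmt8 :
    ∃ C : ℝ, 0 ≤ C ∧
      ∀ (f f' g : ℝ → ℂ),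
        (∀ x ∈ Set.Ioo (0:ℝ) 1, HasDerivAt f (f' x) x) →
        ContinuousOn f (Set.Icc (0:ℝ) 1) →
        MemLp f' 2 (volume.restrict (Set.Ioo (0:ℝ) 1)) →
        MemLp g 2 (volume.restrict (Set.Ioo (0:ℝ) 1)) →
        ∀ (s : ℝ), ∀ ξ ∈ Set.Icc (0:ℝ) 1,
          ‖∫ r in (0:ℝ)..ξ,
              Complex.sinh ((I * s) * (ξ - r)) * ((I * s) * f r + g r)‖
            ≤ C * Real.sqrt ((∫ r in (0:ℝ)..1, ‖f r‖ ^ 2)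
                + ∫ r in (0:ℝ)..1, ‖f' r‖ ^ 2)
              + Real.sqrt (∫ r in (0:ℝ)..1, ‖g r‖ ^ 2) ∧
          ‖∫ r in (0:ℝ)..ξ,
              Complex.cosh ((I * s) * (ξ - r)) * ((I * s) * f r + g r)‖
            ≤ C * Real.sqrt ((∫ r in (0:ℝ)..1, ‖f r‖ ^ 2)
                + ∫ r in (0:ℝ)..1, ‖f' r‖ ^ 2)
              + Real.sqrt (∫ r in (0:ℝ)..1, ‖g r‖ ^ 2) := by
  refine ⟨5, by norm_num, fun f f' g hff' hf hf'2 hg2 s ξ hξ => ?_⟩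
  have hμ : (I * s).re = 0 := by simp
  have hf0 := norm_le_two_mul_sqrt_integral_norm_sq_add_integral_norm_deriv_sq hf hff' hf'2
    (Set.left_mem_Icc.2 zero_le_one)
  have hfξ := norm_le_two_mul_sqrt_integral_norm_sq_add_integral_norm_deriv_sq hf hff' hf'2 hξ
  have hf'L2 := (integral_norm_le_sqrt_integral_zero_one_norm_sq hf'2 hξ).trans
    (Real.sqrt_le_sqrt (le_add_of_nonneg_left
      (integral_nonneg (μ := volume) zero_le_one fun t _ => sq_nonneg ‖f t‖)))
  have hgL2 := integral_norm_le_sqrt_integral_zero_one_norm_sq hg2 hξ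
  have hsub : Set.uIcc 0 ξ ⊆ Set.uIcc 0 1 :=
    Set.uIcc_subset_uIcc_left (Set.mem_uIcc_of_le hξ.1 hξ.2)
  have hf'ξ := (hf'2.intervalIntegrable one_le_two zero_le_one).mono_set hsub
  have hgξ := (hg2.intervalIntegrable one_le_two zero_le_one).mono_set hsub
  have hfc : ContinuousOn f (Set.Icc 0 ξ) := hf.mono (Set.Icc_subset_Icc_right hξ.2)
  have hff'c : ∀ x ∈ Set.Ioo 0 ξ, HasDerivAt f (f' x) x :=
    fun x hx => hff' x ⟨hx.1, hx.2.trans_le hξ.2⟩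
  have hA := Real.sqrt_nonneg ((∫ r in (0:ℝ)..1, ‖f r‖ ^ 2) + ∫ r in (0:ℝ)..1, ‖f' r‖ ^ 2)
  constructor
  · grw [norm_integral_sinh_mul_le hμ hξ.1 hfc hff'c hf'ξ hgξ]
    linarith
  · grw [norm_integral_cosh_mul_le hμ hξ.1 hfc hff'c hf'ξ hgξ]
    linarith
end

section
/- Let h ∈ L²(1,2), let λ = i s with s real, |s| ≥ (1/√2+1)², and set D(λ) = −e^{√λ} T₊(λ)² + e^{−√λ} T₋(λ)² where T±(λ) = (1/2)[cosh λ ± √λ sinh λ]. Then there is a constant K independent of λ, h, and ξ such that for all ξ ∈ [1,2], |D(λ)|^{−1} ∫₁² |sinh(√λ(2−r))| |h(r)| dr ≤ K ‖h‖_{L²(1,2)}. -/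
open Complex MeasureTheory

/-!
Write `w = √(is) = x + iy`, so that `y² = x²` and `t := 2x = √(2|s|) ≥ 12/5`. With `c = cos s`,
`n = sin s` one gets `8|T±(is)|² = 2c² ∓ 4ycn + t²n²`, a quadratic form in `(c, n)` whose values
on the unit circle lie in `[1 - t⁻², 1 + t² + t⁻²]`. Hence `|D| ≥ eˣ|T₊|² - e⁻ˣ|T₋|² ≥ eˣ/80` as
soon as `10(t⁴ + t² + 1) ≤ (9t² - 10)eᵗ`, which the degree-five Taylor polynomial of `exp` gives
for `t ≥ 12/5`. On the other side `|sinh(w(2 - r))| ≤ e^{x(2 - r)} ≤ eˣ`, and Cauchy–Schwarz on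
`[1, 2]`, an interval of length one, bounds `∫|h|` by `‖h‖₂`; so `K = 80` works.
-/

-- `Tplus`, `Tminus` and `charDet` are the paper's `T₊(λ)`, `T₋(λ)` and `D(λ)`.
noncomputable def Tplus (z : ℂ) : ℂ := (1 / 2) * (cosh z + z ^ (1 / 2 : ℂ) * sinh z)

noncomputable def Tminus (z : ℂ) : ℂ := (1 / 2) * (cosh z - z ^ (1 / 2 : ℂ) * sinh z)

noncomputable def charDet (z : ℂ) : ℂ :=
  -exp (z ^ (1 / 2 : ℂ)) * Tplus z ^ 2 + exp (-z ^ (1 / 2 : ℂ)) * Tminus z ^ 2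

lemma quadratic_form_lower {c n v t : ℝ} (hcn : c ^ 2 + n ^ 2 = 1) (hv : v ^ 2 = t ^ 2) :
    t ^ 2 - 1 ≤ t ^ 2 * (2 * c ^ 2 + 2 * v * c * n + t ^ 2 * n ^ 2) := by
  have key : (t ^ 2 + 1) * (t ^ 2 * (2 * c ^ 2 + 2 * v * c * n + t ^ 2 * n ^ 2) - (t ^ 2 - 1))
      = ((t ^ 2 + 1) * c + t ^ 2 * v * n) ^ 2 + n ^ 2 := by
    linear_combination (t ^ 4 - 1) * hcn - t ^ 4 * n ^ 2 * hv
  nlinarith [sq_nonneg ((t ^ 2 + 1) * c + t ^ 2 * v * n), sq_nonneg n, sq_nonneg t]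

lemma quadratic_form_upper {c n v t : ℝ} (hcn : c ^ 2 + n ^ 2 = 1) (hv : v ^ 2 = t ^ 2) :
    t ^ 2 * (2 * c ^ 2 + 2 * v * c * n + t ^ 2 * n ^ 2) ≤ t ^ 4 + t ^ 2 + 1 := by
  have key : (t ^ 2 + 1) * (t ^ 4 + t ^ 2 + 1 - t ^ 2 * (2 * c ^ 2 + 2 * v * c * n + t ^ 2 * n ^ 2))
      = ((t ^ 2 + 1) * n - t ^ 2 * v * c) ^ 2 + c ^ 2 := by
    linear_combination -(t ^ 2 + 1) * (t ^ 4 + t ^ 2 + 1) * hcn - t ^ 4 * c ^ 2 * hv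
  nlinarith [sq_nonneg ((t ^ 2 + 1) * n - t ^ 2 * v * c), sq_nonneg c, sq_nonneg t]

lemma poly_le_mul_exp {t : ℝ} (ht : 12 / 5 ≤ t) :
    10 * (t ^ 4 + t ^ 2 + 1) ≤ (9 * t ^ 2 - 10) * Real.exp t := by
  have htaylor := Real.sum_le_exp_of_nonneg (by linarith : (0:ℝ) ≤ t) 6
  simp only [Finset.sum_range_succ, Finset.sum_range_zero, Nat.factorial] at htaylor
  norm_num at htaylor
  have hpos : 0 ≤ 9 * t ^ 2 - 10 := by nlinarith
  have hpoly : 10 * (t ^ 4 + t ^ 2 + 1) ≤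
      (9 * t ^ 2 - 10) * (1 + t + t ^ 2 / 2 + t ^ 3 / 6 + t ^ 4 / 24 + t ^ 5 / 120) := by
    nlinarith [sq_nonneg (t - 12/5), mul_nonneg (sub_nonneg.2 ht) (sub_nonneg.2 ht),
      sq_nonneg ((t - 12/5) * t), sq_nonneg ((t - 12/5) * t ^ 2), sq_nonneg t]
  nlinarith

lemma twelve_fifths_le_two_mul_sqrt {s : ℝ} (hs : (1 / √2 + 1) ^ 2 ≤ |s|) :
    12 / 5 ≤ 2 * √(|s| / 2) := by
  have h2 : (7 / 5 : ℝ) ≤ √2 := Real.le_sqrt_of_sq_le (by norm_num)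
  have hsq : 2 * (1 / √2 + 1) ^ 2 = 3 + 2 * √2 := by
    field_simp
    linear_combination (-2 * √2 - 1) * Real.sq_sqrt (show (0:ℝ) ≤ 2 by norm_num)
  rw [← Real.sqrt_sq (by norm_num : (0:ℝ) ≤ 2), ← Real.sqrt_mul (by norm_num)]
  exact Real.le_sqrt_of_sq_le (by linarith)

lemma norm_sinh_le_exp_abs_re (z : ℂ) : ‖sinh z‖ ≤ Real.exp |z.re| := by
  rw [sinh, norm_div, RCLike.norm_ofNat]
  calc ‖exp z - exp (-z)‖ / 2 ≤ (‖exp z‖ + ‖exp (-z)‖) / 2 := by gcongr; exact norm_sub_le _ _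
    _ = (Real.exp z.re + Real.exp (-z.re)) / 2 := by rw [norm_exp, norm_exp, neg_re]
    _ ≤ Real.exp |z.re| := by
      have h1 := Real.exp_le_exp.2 (le_abs_self z.re)
      have h2 := Real.exp_le_exp.2 (neg_le_abs z.re)
      linarith

lemma sub_le_norm_neg_exp_mul_sq_add_exp_neg_mul_sq (w A B : ℂ) :
    Real.exp w.re * ‖A‖ ^ 2 - Real.exp (-w.re) * ‖B‖ ^ 2 ≤
      ‖-exp w * A ^ 2 + exp (-w) * B ^ 2‖ := by
  have := norm_sub_norm_le (exp w * A ^ 2) (exp (-w) * B ^ 2)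
  rw [norm_mul, norm_mul, norm_pow, norm_pow, norm_exp, norm_exp, neg_re] at this
  calc _ ≤ _ := this
    _ = _ := by rw [← norm_neg]; congr 1; ring

lemma integral_le_sqrt_integral_sq {α : Type*} [MeasurableSpace α] {μ : Measure α}
    [IsProbabilityMeasure μ] {f : α → ℝ} (hf : MemLp f 2 μ) :
    ∫ x, f x ∂μ ≤ √(∫ x, f x ^ 2 ∂μ) := by
  have hvar := ProbabilityTheory.variance_nonneg f μ
  rw [ProbabilityTheory.variance_eq_sub hf, sub_nonneg] at hvar
  exact (le_abs_self _).trans (Real.abs_le_sqrt hvar)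

lemma re_cpow_half_I_mul (s : ℝ) : ((I * s) ^ (1 / 2 : ℂ)).re = √(|s| / 2) := by
  rw [one_div, cpow_inv_two_re]; simp

lemma abs_im_cpow_half_I_mul (s : ℝ) : |((I * s) ^ (1 / 2 : ℂ)).im| = √(|s| / 2) := by
  rw [one_div, abs_cpow_inv_two_im]; simp

lemma norm_sq_half_mul_add (c n : ℝ) (w : ℂ) :
    ‖(1 / 2 : ℂ) * (c + w * (n * I))‖ ^ 2 = ((c - w.im * n) ^ 2 + (w.re * n) ^ 2) / 4 := by
  have : (c : ℂ) + w * (n * I) = ((c - w.im * n : ℝ) : ℂ) + ((w.re * n : ℝ) : ℂ) * I := by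
    apply Complex.ext <;> simp [sub_eq_add_neg]
  rw [this, norm_mul, mul_pow, Complex.sq_norm, Complex.sq_norm, normSq_add_mul_I]
  norm_num
  ring

lemma norm_sq_half_mul_add_ge {c n : ℝ} (hcn : c ^ 2 + n ^ 2 = 1) {w : ℂ}
    (hw : w.im ^ 2 = w.re ^ 2) :
    (2 * w.re) ^ 2 - 1 ≤ 8 * (2 * w.re) ^ 2 * ‖(1 / 2 : ℂ) * (c + w * (n * I))‖ ^ 2 := by
  calc _ ≤ _ := quadratic_form_lower hcn (v := -2 * w.im) (by linear_combination 4 * hw)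
    _ = _ := by rw [norm_sq_half_mul_add]; linear_combination (-2 * (2 * w.re) ^ 2 * n ^ 2) * hw

lemma norm_sq_half_mul_sub_le {c n : ℝ} (hcn : c ^ 2 + n ^ 2 = 1) {w : ℂ}
    (hw : w.im ^ 2 = w.re ^ 2) :
    8 * (2 * w.re) ^ 2 * ‖(1 / 2 : ℂ) * (c - w * (n * I))‖ ^ 2 ≤
      (2 * w.re) ^ 4 + (2 * w.re) ^ 2 + 1 := by
  calc _ = _ := by
        rw [sub_eq_add_neg, ← neg_mul, norm_sq_half_mul_add, neg_re, neg_im]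
        linear_combination (2 * (2 * w.re) ^ 2 * n ^ 2) * hw
    _ ≤ _ := quadratic_form_upper hcn (v := 2 * w.im) (by linear_combination 4 * hw)

lemma Tplus_I_mul (s : ℝ) :
    Tplus (I * s) = (1 / 2) * (Real.cos s + (I * s) ^ (1 / 2 : ℂ) * (Real.sin s * I)) := by
  rw [Tplus, mul_comm I, cosh_mul_I, sinh_mul_I, ofReal_cos, ofReal_sin]

lemma Tminus_I_mul (s : ℝ) :
    Tminus (I * s) = (1 / 2) * (Real.cos s - (I * s) ^ (1 / 2 : ℂ) * (Real.sin s * I)) := by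
  rw [Tminus, mul_comm I, cosh_mul_I, sinh_mul_I, ofReal_cos, ofReal_sin]

lemma div_eighty_le_of_quadratic_bounds {E P M N t : ℝ} (hE : 0 < E) (ht : 0 < t)
    (hP : t ^ 2 - 1 ≤ 8 * t ^ 2 * P) (hM : 8 * t ^ 2 * M ≤ t ^ 4 + t ^ 2 + 1)
    (hexp : 10 * (t ^ 4 + t ^ 2 + 1) ≤ (9 * t ^ 2 - 10) * E ^ 2) (hN : E * P - E⁻¹ * M ≤ N) :
    E / 80 ≤ N := by
  have key : E ^ 2 * t ^ 2 ≤ 80 * t ^ 2 * E * N := by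
    calc E ^ 2 * t ^ 2 ≤ 10 * E ^ 2 * (8 * t ^ 2 * P) - 10 * (8 * t ^ 2 * M) := by nlinarith
      _ = 80 * t ^ 2 * E * (E * P - E⁻¹ * M) := by field_simp; ring
      _ ≤ 80 * t ^ 2 * E * N := by gcongr
  rw [div_le_iff₀ (by norm_num)]
  nlinarith [mul_pos (pow_pos ht 2) hE]

lemma norm_charDet_I_mul_ge {s : ℝ} (hs : (1 / √2 + 1) ^ 2 ≤ |s|) :
    Real.exp ((I * s) ^ (1 / 2 : ℂ)).re / 80 ≤ ‖charDet (I * s)‖ := by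
  set w := (I * s) ^ (1 / 2 : ℂ)
  have hw : w.im ^ 2 = w.re ^ 2 := by
    rw [← sq_abs, abs_im_cpow_half_I_mul, re_cpow_half_I_mul]
  have ht : 12 / 5 ≤ 2 * w.re := re_cpow_half_I_mul s ▸ twelve_fifths_le_two_mul_sqrt hs
  have hcn := Real.cos_sq_add_sin_sq s
  have hexp : Real.exp (2 * w.re) = Real.exp w.re ^ 2 := by rw [← Real.exp_nat_mul]; norm_num
  refine div_eighty_le_of_quadratic_bounds (Real.exp_pos _) (by linarith)
    (Tplus_I_mul s ▸ norm_sq_half_mul_add_ge hcn hw)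
    (Tminus_I_mul s ▸ norm_sq_half_mul_sub_le hcn hw)
    (hexp ▸ poly_le_mul_exp ht) ?_
  rw [← Real.exp_neg]
  exact sub_le_norm_neg_exp_mul_sq_add_exp_neg_mul_sq w _ _

lemma integral_norm_sinh_mul_le {w : ℂ} (hw : 0 ≤ w.re) {g : ℝ → ℝ} (hg0 : ∀ r, 0 ≤ g r)
    (hg : IntegrableOn g (Set.Ioc 1 2)) :
    ∫ r in (1:ℝ)..2, ‖sinh (w * (2 - r))‖ * g r ≤ Real.exp w.re * ∫ r in (1:ℝ)..2, g r := by
  rw [intervalIntegral.integral_of_le one_le_two, intervalIntegral.integral_of_le one_le_two,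
    ← integral_const_mul]
  refine integral_mono_of_nonneg (ae_of_all _ fun r => mul_nonneg (norm_nonneg _) (hg0 r))
    (hg.const_mul _) ?_
  filter_upwards [ae_restrict_mem measurableSet_Ioc] with r hr
  refine mul_le_mul_of_nonneg_right ?_ (hg0 r)
  refine (norm_sinh_le_exp_abs_re _).trans (Real.exp_le_exp.2 ?_)
  have hre : (w * (2 - r)).re = w.re * (2 - r) := by simp
  rw [hre, abs_of_nonneg (mul_nonneg hw (by linarith [hr.2]))]
  exact mul_le_of_le_one_right hw (by linarith [hr.1])

theorem stmt11 :
    ∃ K : ℝ, 0 < K ∧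
      ∀ (s : ℝ), |s| ≥ (1 / Real.sqrt 2 + 1) ^ 2 →
        ∀ (h : ℝ → ℂ), MemLp h 2 (volume.restrict (Set.Ioo (1:ℝ) 2)) →
          ∀ ξ ∈ Set.Icc (1:ℝ) 2,
            (‖-Complex.exp ((I * s) ^ (1/2 : ℂ))
                  * ((1/2 : ℂ) * (Complex.cosh (I * s)
                      + (I * s) ^ (1/2 : ℂ) * Complex.sinh (I * s))) ^ 2
                + Complex.exp (-((I * s) ^ (1/2 : ℂ)))
                  * ((1/2 : ℂ) * (Complex.cosh (I * s)
                      - (I * s) ^ (1/2 : ℂ) * Complex.sinh (I * s))) ^ 2‖)⁻¹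
              * (∫ r in (1:ℝ)..2,
                  ‖Complex.sinh ((I * s) ^ (1/2 : ℂ) * (2 - r))‖
                    * ‖h r‖)
            ≤ K * Real.sqrt (∫ r in (1:ℝ)..2, ‖h r‖ ^ 2) := by
  refine ⟨80, by norm_num, fun s hs h hh _ _ => ?_⟩
  change ‖charDet (I * s)‖⁻¹ * _ ≤ _
  set x := ((I * s) ^ (1 / 2 : ℂ)).re
  have hx : 0 ≤ x := by rw [show x = _ from re_cpow_half_I_mul s]; positivity
  have hh' : MemLp (fun r => ‖h r‖) 2 (volume.restrict (Set.Ioc 1 2)) := by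
    rw [← Measure.restrict_congr_set Ioo_ae_eq_Ioc]
    exact hh.norm
  have : IsProbabilityMeasure (volume.restrict (Set.Ioc (1:ℝ) 2)) := ⟨by norm_num⟩
  have hD := norm_charDet_I_mul_ge hs
  have hsinh :=
    integral_norm_sinh_mul_le hx (fun r => norm_nonneg (h r)) (hh'.integrable one_le_two)
  have hCS : ∫ r in (1:ℝ)..2, ‖h r‖ ≤ √(∫ r in (1:ℝ)..2, ‖h r‖ ^ 2) := by
    rw [intervalIntegral.integral_of_le one_le_two, intervalIntegral.integral_of_le one_le_two]
    exact integral_le_sqrt_integral_sq hh'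
  calc ‖charDet (I * s)‖⁻¹ * _
        ≤ (Real.exp x / 80)⁻¹ * (Real.exp x * ∫ r in (1:ℝ)..2, ‖h r‖) := by
        gcongr
        exact intervalIntegral.integral_nonneg one_le_two fun r _ => by positivity
    _ = 80 * ∫ r in (1:ℝ)..2, ‖h r‖ := by field_simp
    _ ≤ 80 * √(∫ r in (1:ℝ)..2, ‖h r‖ ^ 2) := by gcongr
end
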